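/- arXiv:0904.4246 — 8 statements merged into one kernel-verified Lean document; each statement's English description precedes it below -/
import Mathlib

section
/- Define on the region U = {(ρ,θ,ψ) : ρ > 0, 0 < θ < π/2, 0 < ψ < π} the functions r(ρ,θ,ψ) = ρ² sin θ cos θ sin ψ, z¹(ρ,θ,ψ) = ρ cos θ cos ψ, and z²(ρ,θ,ψ) = ½ ρ² (cos²θ − sin²θ). Then for α = 1, 2 and all (ρ,θ,ψ) ∈ U one has ⟨∇r, ∇z^α⟩ = 0, where for smooth functions u, v on U the pairing is ⟨∇u, ∇v⟩ = (∂_ρ u)(∂_ρ v) + ρ⁻²(∂_θ u)(∂_θ v) + ρ⁻² cos⁻²θ (∂_ψ u)(∂_ψ v). -/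
open Real

/-- Partial derivative in the first variable. -/
noncomputable def pd1 (f : ℝ → ℝ → ℝ → ℝ) (ρ θ ψ : ℝ) : ℝ := deriv (fun x => f x θ ψ) ρ

/-- Partial derivative in the second variable. -/
noncomputable def pd2 (f : ℝ → ℝ → ℝ → ℝ) (ρ θ ψ : ℝ) : ℝ := deriv (fun x => f ρ x ψ) θ

/-- Partial derivative in the third variable. -/
noncomputable def pd3 (f : ℝ → ℝ → ℝ → ℝ) (ρ θ ψ : ℝ) : ℝ := deriv (fun x => f ρ θ x) ψ

/-- Inner product of gradients with respect to the orbit-space metric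
`g̃ = dρ² + ρ² dθ² + ρ² cos²θ dψ²`:
`⟨∇u, ∇v⟩ = (∂_ρ u)(∂_ρ v) + ρ⁻²(∂_θ u)(∂_θ v) + ρ⁻² cos⁻²θ (∂_ψ u)(∂_ψ v)`. -/
noncomputable def pairing (u v : ℝ → ℝ → ℝ → ℝ) (ρ θ ψ : ℝ) : ℝ :=
  pd1 u ρ θ ψ * pd1 v ρ θ ψ
    + (ρ ^ 2)⁻¹ * (pd2 u ρ θ ψ * pd2 v ρ θ ψ)
    + (ρ ^ 2)⁻¹ * ((cos θ) ^ 2)⁻¹ * (pd3 u ρ θ ψ * pd3 v ρ θ ψ)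

/-! Each of `r`, `z¹`, `z²` is a product `f(ρ) g(θ) h(ψ)`, so every partial derivative is a
one-variable derivative of one factor and `⟨∇r, ∇z^α⟩` becomes an explicit trigonometric
polynomial in `ρ, θ, ψ`; for `z¹` it vanishes by `sin²θ + cos²θ = 1`, for `z²` identically. -/

section Separable

variable {ρ θ ψ : ℝ}

theorem pd1_separable {f g h : ℝ → ℝ} {f' : ℝ} (hf : HasDerivAt f f' ρ) :
    pd1 (fun ρ θ ψ => f ρ * g θ * h ψ) ρ θ ψ = f' * g θ * h ψ :=
  ((hf.mul_const (g θ)).mul_const (h ψ)).deriv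

theorem pd2_separable {f g h : ℝ → ℝ} {g' : ℝ} (hg : HasDerivAt g g' θ) :
    pd2 (fun ρ θ ψ => f ρ * g θ * h ψ) ρ θ ψ = f ρ * g' * h ψ :=
  ((hg.const_mul (f ρ)).mul_const (h ψ)).deriv

theorem pd3_separable {f g h : ℝ → ℝ} {h' : ℝ} (hh : HasDerivAt h h' ψ) :
    pd3 (fun ρ θ ψ => f ρ * g θ * h ψ) ρ θ ψ = f ρ * g θ * h' :=
  (hh.const_mul (f ρ * g θ)).deriv

theorem pairing_separable {F G : ℝ → ℝ → ℝ → ℝ} {f₁ g₁ h₁ f₂ g₂ h₂ : ℝ → ℝ}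
    {f₁' g₁' h₁' f₂' g₂' h₂' : ℝ}
    (hf₁ : HasDerivAt f₁ f₁' ρ) (hg₁ : HasDerivAt g₁ g₁' θ) (hh₁ : HasDerivAt h₁ h₁' ψ)
    (hf₂ : HasDerivAt f₂ f₂' ρ) (hg₂ : HasDerivAt g₂ g₂' θ) (hh₂ : HasDerivAt h₂ h₂' ψ)
    (hF : F = fun ρ θ ψ => f₁ ρ * g₁ θ * h₁ ψ) (hG : G = fun ρ θ ψ => f₂ ρ * g₂ θ * h₂ ψ) :
    pairing F G ρ θ ψ =
      f₁' * g₁ θ * h₁ ψ * (f₂' * g₂ θ * h₂ ψ)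
        + (ρ ^ 2)⁻¹ * (f₁ ρ * g₁' * h₁ ψ * (f₂ ρ * g₂' * h₂ ψ))
        + (ρ ^ 2)⁻¹ * ((cos θ) ^ 2)⁻¹ * (f₁ ρ * g₁ θ * h₁' * (f₂ ρ * g₂ θ * h₂')) := by
  subst hF hG
  rw [pairing, pd1_separable hf₁, pd1_separable hf₂, pd2_separable hg₁, pd2_separable hg₂,
    pd3_separable hh₁, pd3_separable hh₂]

end Separable

theorem stmt_1_general (ρ θ ψ : ℝ) (hθ0 : 0 < θ) (hθ1 : θ < π / 2) :
    pairing (fun ρ θ ψ => ρ ^ 2 * sin θ * cos θ * sin ψ)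
        (fun ρ θ ψ => ρ * cos θ * cos ψ) ρ θ ψ = 0 ∧
    pairing (fun ρ θ ψ => ρ ^ 2 * sin θ * cos θ * sin ψ)
        (fun ρ θ _ => (1 / 2) * ρ ^ 2 * ((cos θ) ^ 2 - (sin θ) ^ 2)) ρ θ ψ = 0 := by
  have hcos : cos θ ≠ 0 := (cos_pos_of_mem_Ioo ⟨by linarith [pi_pos], hθ1⟩).ne'
  have hr_ρ := hasDerivAt_pow 2 ρ
  have hr_θ := (hasDerivAt_sin θ).fun_mul (hasDerivAt_cos θ)
  have hr_ψ := hasDerivAt_sin ψ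
  have hr : (fun ρ θ ψ => ρ ^ 2 * sin θ * cos θ * sin ψ) =
      fun ρ θ ψ => ρ ^ 2 * (sin θ * cos θ) * sin ψ := by
    funext ρ θ ψ; ring
  have hz₂_θ := ((hasDerivAt_cos θ).fun_pow 2).fun_sub ((hasDerivAt_sin θ).fun_pow 2)
  constructor
  · rw [pairing_separable hr_ρ hr_θ hr_ψ (hasDerivAt_id' ρ) (hasDerivAt_cos θ)
      (hasDerivAt_cos ψ) hr rfl]
    field_simp
    linear_combination (ρ * sin θ * sin ψ * cos ψ) * sin_sq_add_cos_sq θ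
  · rw [pairing_separable hr_ρ hr_θ hr_ψ ((hasDerivAt_pow 2 ρ).const_mul (1 / 2)) hz₂_θ
      (hasDerivAt_const ψ 1) hr (by funext ρ θ ψ; ring)]
    field_simp
    ring

/-- Orthogonality `⟨∇r, ∇z^α⟩ = 0`, `α = 1,2`, for the canonical coordinates of
six-dimensional Minkowski space. -/
theorem stmt_1 (ρ θ ψ : ℝ) (hρ : 0 < ρ) (hθ0 : 0 < θ) (hθ1 : θ < π / 2)
    (hψ0 : 0 < ψ) (hψ1 : ψ < π) :
    pairing (fun ρ θ ψ => ρ ^ 2 * sin θ * cos θ * sin ψ)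
        (fun ρ θ ψ => ρ * cos θ * cos ψ) ρ θ ψ = 0 ∧
    pairing (fun ρ θ ψ => ρ ^ 2 * sin θ * cos θ * sin ψ)
        (fun ρ θ _ => (1 / 2) * ρ ^ 2 * ((cos θ) ^ 2 - (sin θ) ^ 2)) ρ θ ψ = 0 :=
  stmt_1_general ρ θ ψ hθ0 hθ1
end

section
/- Define on the region U = {(ρ,θ,ψ) : ρ > 0, 0 < θ < π/2, 0 < ψ < π} the functions r(ρ,θ,ψ) = ρ² sin θ cos θ sin ψ, z¹(ρ,θ,ψ) = ρ cos θ cos ψ, and z²(ρ,θ,ψ) = ½ ρ² (cos²θ − sin²θ). With the pairing ⟨∇u, ∇v⟩ = (∂_ρ u)(∂_ρ v) + ρ⁻²(∂_θ u)(∂_θ v) + ρ⁻² cos⁻²θ (∂_ψ u)(∂_ψ v), one has for all (ρ,θ,ψ) ∈ U the Gram determinant identity ⟨∇z¹,∇z¹⟩·⟨∇z²,∇z²⟩ − ⟨∇z¹,∇z²⟩² = ⟨∇r,∇r⟩. -/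
/-! The gradients are explicit, and the four pairings collapse, via `sin² + cos² = 1`, to
`⟨∇z¹,∇z¹⟩ = 1`, `⟨∇z²,∇z²⟩ = ρ²`, `⟨∇z¹,∇z²⟩ = ρ cos θ cos ψ` and
`⟨∇r,∇r⟩ = ρ² (1 - cos² θ cos² ψ)`, after which the identity is a polynomial one. -/

open Real

namespace CanonicalCoords

noncomputable def r : ℝ → ℝ → ℝ → ℝ := fun ρ θ ψ => ρ ^ 2 * sin θ * cos θ * sin ψ

noncomputable def z₁ : ℝ → ℝ → ℝ → ℝ := fun ρ θ ψ => ρ * cos θ * cos ψ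

noncomputable def z₂ : ℝ → ℝ → ℝ → ℝ :=
  fun ρ θ _ => (1 / 2) * ρ ^ 2 * ((cos θ) ^ 2 - (sin θ) ^ 2)

variable (ρ θ ψ : ℝ)

lemma pd1_z₁ : pd1 z₁ ρ θ ψ = cos θ * cos ψ :=
  (((hasDerivAt_id ρ).mul_const (cos θ)).mul_const (cos ψ)).deriv.trans (by ring)

lemma pd2_z₁ : pd2 z₁ ρ θ ψ = -(ρ * sin θ * cos ψ) :=
  (((hasDerivAt_cos θ).const_mul ρ).mul_const (cos ψ)).deriv.trans (by ring)

lemma pd3_z₁ : pd3 z₁ ρ θ ψ = -(ρ * cos θ * sin ψ) :=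
  ((hasDerivAt_cos ψ).const_mul (ρ * cos θ)).deriv.trans (by ring)

lemma pd1_z₂ : pd1 z₂ ρ θ ψ = ρ * (cos θ ^ 2 - sin θ ^ 2) :=
  (((hasDerivAt_pow 2 ρ).const_mul (1 / 2)).mul_const _).deriv.trans (by ring)

lemma pd2_z₂ : pd2 z₂ ρ θ ψ = -(2 * ρ ^ 2 * sin θ * cos θ) :=
  ((((hasDerivAt_cos θ).pow 2).sub ((hasDerivAt_sin θ).pow 2)).const_mul
    (1 / 2 * ρ ^ 2)).deriv.trans (by ring)

lemma pd3_z₂ : pd3 z₂ ρ θ ψ = 0 := deriv_const ψ _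

lemma pd1_r : pd1 r ρ θ ψ = 2 * ρ * sin θ * cos θ * sin ψ :=
  ((((hasDerivAt_pow 2 ρ).mul_const (sin θ)).mul_const (cos θ)).mul_const
    (sin ψ)).deriv.trans (by ring)

lemma pd2_r : pd2 r ρ θ ψ = ρ ^ 2 * (cos θ ^ 2 - sin θ ^ 2) * sin ψ :=
  ((((hasDerivAt_sin θ).const_mul (ρ ^ 2)).mul (hasDerivAt_cos θ)).mul_const
    (sin ψ)).deriv.trans (by ring)

lemma pd3_r : pd3 r ρ θ ψ = ρ ^ 2 * sin θ * cos θ * cos ψ :=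
  ((hasDerivAt_sin ψ).const_mul (ρ ^ 2 * sin θ * cos θ)).deriv

variable {ρ θ ψ}

lemma pairing_z₁_z₁ (hρ : ρ ≠ 0) (hθ : cos θ ≠ 0) : pairing z₁ z₁ ρ θ ψ = 1 := by
  rw [pairing, pd1_z₁, pd2_z₁, pd3_z₁]
  field_simp
  linear_combination cos ψ ^ 2 * sin_sq_add_cos_sq θ + sin_sq_add_cos_sq ψ

lemma pairing_z₂_z₂ (hρ : ρ ≠ 0) : pairing z₂ z₂ ρ θ ψ = ρ ^ 2 := by
  rw [pairing, pd1_z₂, pd2_z₂, pd3_z₂, mul_zero, mul_zero, add_zero]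
  field_simp
  linear_combination (sin θ ^ 2 + cos θ ^ 2 + 1) * sin_sq_add_cos_sq θ

lemma pairing_z₁_z₂ (hρ : ρ ≠ 0) : pairing z₁ z₂ ρ θ ψ = ρ * cos θ * cos ψ := by
  rw [pairing, pd1_z₁, pd2_z₁, pd3_z₁, pd1_z₂, pd2_z₂, pd3_z₂, mul_zero, mul_zero, add_zero]
  field_simp
  linear_combination cos θ * cos ψ * sin_sq_add_cos_sq θ

lemma pairing_r_r (hρ : ρ ≠ 0) (hθ : cos θ ≠ 0) :
    pairing r r ρ θ ψ = ρ ^ 2 * (1 - cos θ ^ 2 * cos ψ ^ 2) := by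
  rw [pairing, pd1_r, pd2_r, pd3_r]
  field_simp
  linear_combination (cos ψ ^ 2 + sin ψ ^ 2 * (sin θ ^ 2 + cos θ ^ 2 + 1)) * sin_sq_add_cos_sq θ
    + sin_sq_add_cos_sq ψ

end CanonicalCoords

theorem stmt_3_general (ρ θ ψ : ℝ) (hρ : 0 < ρ) (hθ0 : 0 < θ) (hθ1 : θ < π / 2) :
    pairing (fun ρ θ ψ => ρ * cos θ * cos ψ) (fun ρ θ ψ => ρ * cos θ * cos ψ) ρ θ ψ *
        pairing (fun ρ θ _ => (1 / 2) * ρ ^ 2 * ((cos θ) ^ 2 - (sin θ) ^ 2))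
          (fun ρ θ _ => (1 / 2) * ρ ^ 2 * ((cos θ) ^ 2 - (sin θ) ^ 2)) ρ θ ψ
      - (pairing (fun ρ θ ψ => ρ * cos θ * cos ψ)
          (fun ρ θ _ => (1 / 2) * ρ ^ 2 * ((cos θ) ^ 2 - (sin θ) ^ 2)) ρ θ ψ) ^ 2
      = pairing (fun ρ θ ψ => ρ ^ 2 * sin θ * cos θ * sin ψ)
          (fun ρ θ ψ => ρ ^ 2 * sin θ * cos θ * sin ψ) ρ θ ψ := by
  have hcos : cos θ ≠ 0 := (cos_pos_of_mem_Ioo ⟨by linarith [pi_pos], hθ1⟩).ne'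
  open CanonicalCoords in
  change pairing z₁ z₁ ρ θ ψ * pairing z₂ z₂ ρ θ ψ - pairing z₁ z₂ ρ θ ψ ^ 2 = pairing r r ρ θ ψ
  rw [CanonicalCoords.pairing_z₁_z₁ hρ.ne' hcos, CanonicalCoords.pairing_z₂_z₂ hρ.ne',
    CanonicalCoords.pairing_z₁_z₂ hρ.ne', CanonicalCoords.pairing_r_r hρ.ne' hcos]
  ring

/-- The Gram determinant identity
`⟨∇z¹,∇z¹⟩·⟨∇z²,∇z²⟩ − ⟨∇z¹,∇z²⟩² = ⟨∇r,∇r⟩` (i.e. `λ = 1`) for the canonical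
coordinates of six-dimensional Minkowski space. -/
theorem stmt_3 (ρ θ ψ : ℝ) (hρ : 0 < ρ) (hθ0 : 0 < θ) (hθ1 : θ < π / 2)
    (hψ0 : 0 < ψ) (hψ1 : ψ < π) :
    pairing (fun ρ θ ψ => ρ * cos θ * cos ψ) (fun ρ θ ψ => ρ * cos θ * cos ψ) ρ θ ψ *
        pairing (fun ρ θ _ => (1 / 2) * ρ ^ 2 * ((cos θ) ^ 2 - (sin θ) ^ 2))
          (fun ρ θ _ => (1 / 2) * ρ ^ 2 * ((cos θ) ^ 2 - (sin θ) ^ 2)) ρ θ ψ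
      - (pairing (fun ρ θ ψ => ρ * cos θ * cos ψ)
          (fun ρ θ _ => (1 / 2) * ρ ^ 2 * ((cos θ) ^ 2 - (sin θ) ^ 2)) ρ θ ψ) ^ 2
      = pairing (fun ρ θ ψ => ρ ^ 2 * sin θ * cos θ * sin ψ)
          (fun ρ θ ψ => ρ ^ 2 * sin θ * cos θ * sin ψ) ρ θ ψ :=
  stmt_3_general ρ θ ψ hρ hθ0 hθ1
end

section
/- Fix real numbers k, l, C and define on the region U' = {(ρ,θ,ψ) : ρ > 0, 0 < θ < π/4, 0 < ψ < π/2} the functions r(ρ,θ,ψ) = ρ² sin θ cos θ sin ψ and z(ρ,θ,ψ) = C ρ^k (cos θ)^l (cos 2θ)^{(k−l)/2} (cos ψ)^l. Then for all (ρ,θ,ψ) ∈ U', ⟨∇r, ∇z⟩ = 0, where ⟨∇u, ∇v⟩ = (∂_ρ u)(∂_ρ v) + ρ⁻²(∂_θ u)(∂_θ v) + ρ⁻² cos⁻²θ (∂_ψ u)(∂_ψ v). -/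
/-!
Both `r` and `z` separate in `(ρ, θ, ψ)`. Euler's relation `ρ ∂_ρ z = k z` and
`cos ψ ∂_ψ z = -l sin ψ z` reduce the pairing to `sin ψ · C ρ^k (cos ψ)^l` times
`2k sin θ cos θ F + cos 2θ F' − l tan θ F`, and this vanishes because
`F(θ) = (cos θ)^l (cos 2θ)^{(k−l)/2}` solves `cos 2θ F' = (l tan θ − k sin 2θ) F`
(logarithmic differentiation, using `sin 2θ = 2 sin θ cos θ`).
-/

open Real

/-- The canonical radial coordinate `r` of six-dimensional Minkowski space. -/
noncomputable def minkowskiRadius (ρ θ ψ : ℝ) : ℝ := ρ ^ 2 * sin θ * cos θ * sin ψ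

noncomputable def ansatz (k l C : ℝ) (ρ θ ψ : ℝ) : ℝ :=
  C * ρ ^ k * (cos θ) ^ l * (cos (2 * θ)) ^ ((k - l) / 2) * (cos ψ) ^ l

/-- The profile `F(θ)` of the ansatz, normalised to `C = 1`. -/
noncomputable def ansatzProfile (k l θ : ℝ) : ℝ := cos θ ^ l * cos (2 * θ) ^ ((k - l) / 2)

/-- Both sides vanish where `f x = 0`, even though `f ^ p` need not be differentiable there. -/
theorem mul_deriv_rpow_const_of_hasDerivAt {f : ℝ → ℝ} {f' x : ℝ} (p : ℝ)
    (hf : HasDerivAt f f' x) :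
    f x * deriv (fun t => f t ^ p) x = p * f' * f x ^ p := by
  by_cases hfx : f x = 0
  · rcases eq_or_ne p 0 with rfl | hp
    · simp [hfx]
    · simp [hfx, zero_rpow hp]
  · rw [(hf.rpow_const (Or.inl hfx)).deriv, rpow_sub_one hfx]
    field_simp

theorem mul_deriv_rpow_const (x p : ℝ) : x * deriv (fun t => t ^ p) x = p * x ^ p := by
  simpa using mul_deriv_rpow_const_of_hasDerivAt p (hasDerivAt_id' x)

theorem pd1_minkowskiRadius (ρ θ ψ : ℝ) :
    pd1 minkowskiRadius ρ θ ψ = 2 * ρ * sin θ * cos θ * sin ψ := by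
  have h := (((hasDerivAt_pow 2 ρ).mul_const (sin θ)).mul_const (cos θ)).mul_const (sin ψ)
  simp only [pd1, minkowskiRadius]
  rw [h.deriv]
  ring

theorem pd2_minkowskiRadius (ρ θ ψ : ℝ) :
    pd2 minkowskiRadius ρ θ ψ = ρ ^ 2 * cos (2 * θ) * sin ψ := by
  have h : HasDerivAt (fun x => minkowskiRadius ρ x ψ) _ θ :=
    (((hasDerivAt_sin θ).const_mul (ρ ^ 2)).mul (hasDerivAt_cos θ)).mul_const (sin ψ)
  rw [pd2, h.deriv, cos_two_mul, ← sin_sq_add_cos_sq θ]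
  ring

theorem pd3_minkowskiRadius (ρ θ ψ : ℝ) :
    pd3 minkowskiRadius ρ θ ψ = ρ ^ 2 * sin θ * cos θ * cos ψ := by
  simp only [pd3, minkowskiRadius]
  rw [((hasDerivAt_sin ψ).const_mul (ρ ^ 2 * sin θ * cos θ)).deriv]

theorem mul_pd1_ansatz (k l C ρ θ ψ : ℝ) :
    ρ * pd1 (ansatz k l C) ρ θ ψ = k * ansatz k l C ρ θ ψ := by
  have h : (fun x => ansatz k l C x θ ψ) =
      fun x => (C * cos θ ^ l * cos (2 * θ) ^ ((k - l) / 2) * cos ψ ^ l) * x ^ k := by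
    funext x; simp only [ansatz]; ring
  rw [pd1, h, deriv_const_mul_field, mul_left_comm, mul_deriv_rpow_const, ansatz]
  ring

theorem pd2_ansatz (k l C ρ θ ψ : ℝ) :
    pd2 (ansatz k l C) ρ θ ψ = C * ρ ^ k * cos ψ ^ l * deriv (ansatzProfile k l) θ := by
  have h : (fun x => ansatz k l C ρ x ψ) =
      fun x => (C * ρ ^ k * cos ψ ^ l) * ansatzProfile k l x := by
    funext x; simp only [ansatz, ansatzProfile]; ring
  rw [pd2, h, deriv_const_mul_field]

theorem cos_mul_pd3_ansatz (k l C ρ θ ψ : ℝ) :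
    cos ψ * pd3 (ansatz k l C) ρ θ ψ = -l * sin ψ * ansatz k l C ρ θ ψ := by
  have h : (fun x => ansatz k l C ρ θ x) =
      fun x => (C * ρ ^ k * cos θ ^ l * cos (2 * θ) ^ ((k - l) / 2)) * cos x ^ l := by
    funext x; simp only [ansatz]
  rw [pd3, h, deriv_const_mul_field, mul_left_comm,
    mul_deriv_rpow_const_of_hasDerivAt l (hasDerivAt_cos ψ), ansatz]
  ring

/-- For `z = ρ^k F(θ) (cos ψ)^l` this first-order ODE for `F` is exactly the condition
`g_{rz} = 0`. -/
theorem cos_two_mul_mul_deriv_ansatzProfile (k l : ℝ) {θ : ℝ} (hc : cos θ ≠ 0)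
    (hc2 : cos (2 * θ) ≠ 0) :
    cos (2 * θ) * deriv (ansatzProfile k l) θ =
      (l * tan θ - k * sin (2 * θ)) * ansatzProfile k l θ := by
  have h : HasDerivAt (ansatzProfile k l) _ θ :=
    ((hasDerivAt_cos θ).rpow_const (Or.inl hc)).mul
      ((((hasDerivAt_id' θ).const_mul 2).cos).rpow_const (Or.inl hc2))
  rw [h.deriv, ansatzProfile, rpow_sub_one hc, rpow_sub_one hc2, tan_eq_sin_div_cos]
  rw [cos_two_mul] at hc2 ⊢
  rw [sin_two_mul]
  field_simp
  ring

theorem stmt_4_general (k l C : ℝ) (ρ θ ψ : ℝ) (hρ : 0 < ρ) (hθ0 : 0 < θ) (hθ1 : θ < π / 4) :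
    pairing (fun ρ θ ψ => ρ ^ 2 * sin θ * cos θ * sin ψ)
        (fun ρ θ ψ =>
          C * ρ ^ k * (cos θ) ^ l * (cos (2 * θ)) ^ ((k - l) / 2) * (cos ψ) ^ l)
        ρ θ ψ = 0 := by
  have hc : cos θ ≠ 0 := (cos_pos_of_mem_Ioo ⟨by linarith [pi_pos], by linarith⟩).ne'
  have hc2 : cos (2 * θ) ≠ 0 := (cos_pos_of_mem_Ioo ⟨by linarith [pi_pos], by linarith⟩).ne'
  have hF := cos_two_mul_mul_deriv_ansatzProfile k l hc hc2
  have h1 := mul_pd1_ansatz k l C ρ θ ψ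
  have h3 := cos_mul_pd3_ansatz k l C ρ θ ψ
  have hz : ansatz k l C ρ θ ψ = C * ρ ^ k * ansatzProfile k l θ * cos ψ ^ l := by
    rw [ansatz, ansatzProfile]; ring
  change pairing minkowskiRadius (ansatz k l C) ρ θ ψ = 0
  rw [pairing, pd1_minkowskiRadius, pd2_minkowskiRadius, pd3_minkowskiRadius, pd2_ansatz]
  rw [tan_eq_sin_div_cos, sin_two_mul] at hF
  field_simp at hF ⊢
  rw [hz] at h1 h3
  linear_combination 2 * cos θ * sin ψ * sin θ * cos θ * h1
    + sin ψ * C * ρ ^ k * cos ψ ^ l * hF + sin θ * h3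

/-- For any real constants `k, l, C` the ansatz
`z = C ρ^k (cos θ)^l (cos 2θ)^{(k−l)/2} (cos ψ)^l` is orthogonal to
`r = ρ² sin θ cos θ sin ψ` on the region `ρ > 0`, `0 < θ < π/4`, `0 < ψ < π/2`. -/
theorem stmt_4 (k l C : ℝ) (ρ θ ψ : ℝ) (hρ : 0 < ρ) (hθ0 : 0 < θ) (hθ1 : θ < π / 4)
    (hψ0 : 0 < ψ) (hψ1 : ψ < π / 2) :
    pairing (fun ρ θ ψ => ρ ^ 2 * sin θ * cos θ * sin ψ)
        (fun ρ θ ψ =>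
          C * ρ ^ k * (cos θ) ^ l * (cos (2 * θ)) ^ ((k - l) / 2) * (cos ψ) ^ l)
        ρ θ ψ = 0 :=
  stmt_4_general k l C ρ θ ψ hρ hθ0 hθ1
end

section
/- Let ρ₀ > 0 and put f(ρ) = 1 − ρ₀³/ρ³, and let r(ρ,θ,ψ) = ρ² √(f(ρ)) sin θ cos θ sin ψ on the region V = {(ρ,θ,ψ) : ρ > ρ₀, 0 < θ < π/2, 0 < ψ < π}. Let b₁, b₂ : (ρ₀,∞) → ℝ be differentiable and nowhere zero, and set z¹ = b₁(ρ) cos θ cos ψ, z² = b₂(ρ)(cos²θ − sin²θ). Then the orthogonality conditions ⟨∇r, ∇z¹⟩ = 0 and ⟨∇r, ∇z²⟩ = 0 hold at every point of V, where ⟨∇u,∇v⟩ = f(ρ)(∂_ρ u)(∂_ρ v) + ρ⁻²(∂_θ u)(∂_θ v) + ρ⁻² cos⁻²θ (∂_ψ u)(∂_ψ v), if and only if 2 b₁′(ρ)/b₁(ρ) = b₂′(ρ)/b₂(ρ) = 8ρ³/(4ρ⁴ − ρ ρ₀³) for all ρ > ρ₀. -/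
/-!
The functions `r`, `z¹`, `z²` are products of a function of `ρ`, one of `θ` and one of `ψ`, so
each pairing `⟨∇r, ∇zᵅ⟩` is an angular factor times the radial expression
`f R' b' - k R b / ρ²` with `R = ρ² √f`; the `θ`- and `ψ`-terms combine through
`sin² + cos² = 1` into `k = 2` for `z¹` and `k = 4` for `z²`. Since
`f R' = √f (4ρ³ - ρ₀³) / (2ρ²)`, the radial expression vanishes iff
`b' (4ρ³ - ρ₀³) = 2kρ² b`, i.e. iff `b'/b = 2kρ³ / (4ρ⁴ - ρρ₀³)`. The angular factors do not
vanish at `θ = ψ ∈ (0, π/4)`, so orthogonality there already forces the radial conditions.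
-/

open Real

/-- Inner product of gradients with respect to the orbit-space metric
`g̃ = f⁻¹ dρ² + ρ² dθ² + ρ² cos²θ dψ²`:
`⟨∇u,∇v⟩ = f(ρ)(∂_ρ u)(∂_ρ v) + ρ⁻²(∂_θ u)(∂_θ v) + ρ⁻² cos⁻²θ (∂_ψ u)(∂_ψ v)`. -/
noncomputable def pairingF (f : ℝ → ℝ) (u v : ℝ → ℝ → ℝ → ℝ) (ρ θ ψ : ℝ) : ℝ :=
  f ρ * (pd1 u ρ θ ψ * pd1 v ρ θ ψ)
    + (ρ ^ 2)⁻¹ * (pd2 u ρ θ ψ * pd2 v ρ θ ψ)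
    + (ρ ^ 2)⁻¹ * ((cos θ) ^ 2)⁻¹ * (pd3 u ρ θ ψ * pd3 v ρ θ ψ)

theorem pd1_mul_mul (u v w : ℝ → ℝ) (ρ θ ψ : ℝ) :
    pd1 (fun ρ θ ψ => u ρ * v θ * w ψ) ρ θ ψ = deriv u ρ * v θ * w ψ := by
  rw [pd1, deriv_mul_const_field, deriv_mul_const_field]

theorem pd2_mul_mul (u v w : ℝ → ℝ) (ρ θ ψ : ℝ) :
    pd2 (fun ρ θ ψ => u ρ * v θ * w ψ) ρ θ ψ = u ρ * deriv v θ * w ψ := by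
  rw [pd2, deriv_mul_const_field, deriv_const_mul_field]

theorem pd3_mul_mul (u v w : ℝ → ℝ) (ρ θ ψ : ℝ) :
    pd3 (fun ρ θ ψ => u ρ * v θ * w ψ) ρ θ ψ = u ρ * v θ * deriv w ψ :=
  deriv_const_mul_field _

theorem deriv_sin_mul_cos (θ : ℝ) :
    deriv (fun θ => sin θ * cos θ) θ = cos θ ^ 2 - sin θ ^ 2 := by
  have h : HasDerivAt (fun θ => sin θ * cos θ) (cos θ * cos θ + sin θ * -sin θ) θ :=
    (hasDerivAt_sin θ).mul (hasDerivAt_cos θ)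
  rw [h.deriv]
  ring

theorem deriv_cos_sq_sub_sin_sq (θ : ℝ) :
    deriv (fun θ => cos θ ^ 2 - sin θ ^ 2) θ = -(4 * sin θ * cos θ) := by
  have h : HasDerivAt (fun θ => cos θ ^ 2 - sin θ ^ 2)
      (2 * cos θ ^ 1 * -sin θ - 2 * sin θ ^ 1 * cos θ) θ :=
    ((hasDerivAt_cos θ).pow 2).sub ((hasDerivAt_sin θ).pow 2)
  rw [h.deriv]
  ring

theorem cos_sq_sub_sin_sq_pos {θ : ℝ} (h₀ : -(π / 4) < θ) (h₁ : θ < π / 4) :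
    0 < cos θ ^ 2 - sin θ ^ 2 := by
  rw [← cos_two_mul']
  exact cos_pos_of_mem_Ioo ⟨by linarith, by linarith⟩

section Separable

variable (f R b : ℝ → ℝ) {ρ θ : ℝ} (ψ : ℝ)

theorem pairingF_sin_cos_sin_cos_cos (hθ : cos θ ≠ 0) :
    pairingF f (fun ρ θ ψ => R ρ * sin θ * cos θ * sin ψ)
        (fun ρ θ ψ => b ρ * cos θ * cos ψ) ρ θ ψ
      = sin θ * cos θ ^ 2 * sin ψ * cos ψ
          * (f ρ * deriv R ρ * deriv b ρ - 2 * R ρ * b ρ / ρ ^ 2) := by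
  have hr : (fun ρ θ ψ => R ρ * sin θ * cos θ * sin ψ)
      = fun ρ θ ψ => R ρ * (fun θ => sin θ * cos θ) θ * sin ψ := by
    funext ρ θ ψ; ring
  rw [pairingF, hr, pd1_mul_mul, pd2_mul_mul, pd3_mul_mul, pd1_mul_mul, pd2_mul_mul,
    pd3_mul_mul, deriv_sin_mul_cos]
  simp only [Real.deriv_sin, Real.deriv_cos]
  have hc : cos θ ^ 2 * (cos θ ^ 2)⁻¹ = 1 := mul_inv_cancel₀ (pow_ne_zero 2 hθ)
  linear_combination (R ρ * b ρ * sin θ * sin ψ * cos ψ / ρ ^ 2) * (sin_sq_add_cos_sq θ - hc)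

theorem pairingF_sin_cos_sin_cos_sq_sub_sin_sq (hθ : cos θ ≠ 0) :
    pairingF f (fun ρ θ ψ => R ρ * sin θ * cos θ * sin ψ)
        (fun ρ θ _ => b ρ * (cos θ ^ 2 - sin θ ^ 2)) ρ θ ψ
      = sin θ * cos θ * sin ψ * (cos θ ^ 2 - sin θ ^ 2)
          * (f ρ * deriv R ρ * deriv b ρ - 4 * R ρ * b ρ / ρ ^ 2) := by
  have hr : (fun ρ θ ψ => R ρ * sin θ * cos θ * sin ψ)
      = fun ρ θ ψ => R ρ * (fun θ => sin θ * cos θ) θ * sin ψ := by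
    funext ρ θ ψ; ring
  have hz : (fun ρ θ (_ : ℝ) => b ρ * (cos θ ^ 2 - sin θ ^ 2))
      = fun ρ θ ψ => b ρ * (fun θ => cos θ ^ 2 - sin θ ^ 2) θ * (fun _ => 1) ψ := by
    funext ρ θ ψ; ring
  rw [pairingF, hr, hz, pd1_mul_mul, pd2_mul_mul, pd3_mul_mul, pd1_mul_mul, pd2_mul_mul,
    pd3_mul_mul, deriv_sin_mul_cos, deriv_cos_sq_sub_sin_sq, deriv_const]
  field_simp
  ring

end Separable

theorem one_sub_div_pow_pos {ρ₀ ρ : ℝ} (hρ₀ : 0 ≤ ρ₀) (hρ : ρ₀ < ρ) {n : ℕ} (hn : n ≠ 0) :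
    0 < 1 - ρ₀ ^ n / ρ ^ n :=
  sub_pos.2 <| (div_lt_one (pow_pos (hρ₀.trans_lt hρ) n)).2 (pow_lt_pow_left₀ hρ hρ₀ hn)

theorem hasDerivAt_sq_mul_sqrt_one_sub {ρ₀ ρ : ℝ} (hρ₀ : 0 ≤ ρ₀) (hρ : ρ₀ < ρ) :
    HasDerivAt (fun x => x ^ 2 * √(1 - ρ₀ ^ 3 / x ^ 3))
      ((4 * ρ ^ 3 - ρ₀ ^ 3) / (2 * ρ ^ 2 * √(1 - ρ₀ ^ 3 / ρ ^ 3))) ρ := by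
  have hρ' : ρ ≠ 0 := (hρ₀.trans_lt hρ).ne'
  have hf := one_sub_div_pow_pos hρ₀ hρ three_ne_zero
  have hS := Real.sq_sqrt hf.le
  have h := (hasDerivAt_pow 2 ρ).fun_mul
    ((((hasDerivAt_const ρ (ρ₀ ^ 3)).fun_div (hasDerivAt_pow 3 ρ) (pow_ne_zero 3 hρ')).const_sub
      1).sqrt hf.ne')
  refine h.congr_deriv ?_
  have hS0 : √(1 - ρ₀ ^ 3 / ρ ^ 3) ≠ 0 := (Real.sqrt_pos.2 hf).ne'
  generalize √(1 - ρ₀ ^ 3 / ρ ^ 3) = S at hS hS0 ⊢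
  field_simp
  rw [hS]
  field_simp
  ring

section Schwarzschild

variable {ρ₀ ρ θ : ℝ} (b : ℝ → ℝ) (ψ : ℝ)

theorem one_sub_div_pow_mul_deriv_sq_mul_sqrt (hρ₀ : 0 ≤ ρ₀) (hρ : ρ₀ < ρ) :
    (1 - ρ₀ ^ 3 / ρ ^ 3) * deriv (fun x => x ^ 2 * √(1 - ρ₀ ^ 3 / x ^ 3)) ρ
      = √(1 - ρ₀ ^ 3 / ρ ^ 3) * (4 * ρ ^ 3 - ρ₀ ^ 3) / (2 * ρ ^ 2) := by
  have hf := one_sub_div_pow_pos hρ₀ hρ three_ne_zero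
  have hS0 : √(1 - ρ₀ ^ 3 / ρ ^ 3) ≠ 0 := (Real.sqrt_pos.2 hf).ne'
  have hS := Real.sq_sqrt hf.le
  rw [(hasDerivAt_sq_mul_sqrt_one_sub hρ₀ hρ).deriv]
  generalize √(1 - ρ₀ ^ 3 / ρ ^ 3) = S at hS hS0 ⊢
  rw [← hS]
  field_simp

theorem pairingF_schwarzschild_cos_cos (hρ₀ : 0 ≤ ρ₀) (hρ : ρ₀ < ρ) (hθ : cos θ ≠ 0) :
    pairingF (fun ρ => 1 - ρ₀ ^ 3 / ρ ^ 3)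
        (fun ρ θ ψ => ρ ^ 2 * √(1 - ρ₀ ^ 3 / ρ ^ 3) * sin θ * cos θ * sin ψ)
        (fun ρ θ ψ => b ρ * cos θ * cos ψ) ρ θ ψ
      = sin θ * cos θ ^ 2 * sin ψ * cos ψ * (√(1 - ρ₀ ^ 3 / ρ ^ 3) / (4 * ρ ^ 2))
          * (2 * deriv b ρ * (4 * ρ ^ 3 - ρ₀ ^ 3) - 8 * ρ ^ 2 * b ρ) := by
  have hρ' : ρ ≠ 0 := (hρ₀.trans_lt hρ).ne'
  refine (pairingF_sin_cos_sin_cos_cos _ (fun ρ => ρ ^ 2 * √(1 - ρ₀ ^ 3 / ρ ^ 3)) b ψ hθ).trans ?_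
  rw [one_sub_div_pow_mul_deriv_sq_mul_sqrt hρ₀ hρ]
  field_simp
  ring

theorem pairingF_schwarzschild_cos_sq_sub_sin_sq (hρ₀ : 0 ≤ ρ₀) (hρ : ρ₀ < ρ) (hθ : cos θ ≠ 0) :
    pairingF (fun ρ => 1 - ρ₀ ^ 3 / ρ ^ 3)
        (fun ρ θ ψ => ρ ^ 2 * √(1 - ρ₀ ^ 3 / ρ ^ 3) * sin θ * cos θ * sin ψ)
        (fun ρ θ _ => b ρ * (cos θ ^ 2 - sin θ ^ 2)) ρ θ ψ
      = sin θ * cos θ * sin ψ * (cos θ ^ 2 - sin θ ^ 2) * (√(1 - ρ₀ ^ 3 / ρ ^ 3) / (2 * ρ ^ 2))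
          * (deriv b ρ * (4 * ρ ^ 3 - ρ₀ ^ 3) - 8 * ρ ^ 2 * b ρ) := by
  have hρ' : ρ ≠ 0 := (hρ₀.trans_lt hρ).ne'
  refine (pairingF_sin_cos_sin_cos_sq_sub_sin_sq _ (fun ρ => ρ ^ 2 * √(1 - ρ₀ ^ 3 / ρ ^ 3)) b ψ
    hθ).trans ?_
  rw [one_sub_div_pow_mul_deriv_sq_mul_sqrt hρ₀ hρ]
  field_simp
  ring

end Schwarzschild

theorem mul_div_eq_eight_mul_pow_div_iff {ρ₀ ρ b b' c : ℝ} (hρ₀ : 0 < ρ₀) (hρ : ρ₀ < ρ)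
    (hb : b ≠ 0) :
    c * b' / b = 8 * ρ ^ 3 / (4 * ρ ^ 4 - ρ * ρ₀ ^ 3)
      ↔ c * b' * (4 * ρ ^ 3 - ρ₀ ^ 3) - 8 * ρ ^ 2 * b = 0 := by
  have hρ' : 0 < ρ := hρ₀.trans hρ
  have hD : 0 < 4 * ρ ^ 3 - ρ₀ ^ 3 := by
    linarith [pow_lt_pow_left₀ hρ hρ₀.le three_ne_zero, pow_pos hρ' 3]
  have hρD : 4 * ρ ^ 4 - ρ * ρ₀ ^ 3 ≠ 0 := by
    rw [show 4 * ρ ^ 4 - ρ * ρ₀ ^ 3 = ρ * (4 * ρ ^ 3 - ρ₀ ^ 3) by ring]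
    positivity
  rw [div_eq_div_iff hb hρD]
  constructor
  · intro h
    exact mul_left_cancel₀ hρ'.ne' (by linear_combination h)
  · intro h
    linear_combination ρ * h

theorem div_eq_eight_mul_pow_div_iff {ρ₀ ρ b b' : ℝ} (hρ₀ : 0 < ρ₀) (hρ : ρ₀ < ρ) (hb : b ≠ 0) :
    b' / b = 8 * ρ ^ 3 / (4 * ρ ^ 4 - ρ * ρ₀ ^ 3)
      ↔ b' * (4 * ρ ^ 3 - ρ₀ ^ 3) - 8 * ρ ^ 2 * b = 0 := by
  simpa only [one_mul] using mul_div_eq_eight_mul_pow_div_iff (c := 1) (b' := b') hρ₀ hρ hb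

theorem stmt_7_general (ρ₀ : ℝ) (hρ₀ : 0 < ρ₀) (b₁ b₂ : ℝ → ℝ)
    (hb₁0 : ∀ ρ, ρ₀ < ρ → b₁ ρ ≠ 0)
    (hb₂0 : ∀ ρ, ρ₀ < ρ → b₂ ρ ≠ 0) :
    (∀ ρ θ ψ : ℝ, ρ₀ < ρ → 0 < θ → θ < π / 2 → 0 < ψ → ψ < π →
      pairingF (fun ρ => 1 - ρ₀ ^ 3 / ρ ^ 3)
          (fun ρ θ ψ => ρ ^ 2 * Real.sqrt (1 - ρ₀ ^ 3 / ρ ^ 3) * sin θ * cos θ * sin ψ)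
          (fun ρ θ ψ => b₁ ρ * cos θ * cos ψ) ρ θ ψ = 0 ∧
      pairingF (fun ρ => 1 - ρ₀ ^ 3 / ρ ^ 3)
          (fun ρ θ ψ => ρ ^ 2 * Real.sqrt (1 - ρ₀ ^ 3 / ρ ^ 3) * sin θ * cos θ * sin ψ)
          (fun ρ θ _ => b₂ ρ * ((cos θ) ^ 2 - (sin θ) ^ 2)) ρ θ ψ = 0)
    ↔ (∀ ρ, ρ₀ < ρ →
        2 * deriv b₁ ρ / b₁ ρ = 8 * ρ ^ 3 / (4 * ρ ^ 4 - ρ * ρ₀ ^ 3) ∧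
        deriv b₂ ρ / b₂ ρ = 8 * ρ ^ 3 / (4 * ρ ^ 4 - ρ * ρ₀ ^ 3)) := by
  have hcos : ∀ θ, 0 < θ → θ < π / 2 → cos θ ≠ 0 := fun θ h₀ h₁ =>
    (cos_pos_of_mem_Ioo ⟨by linarith, h₁⟩).ne'
  refine ⟨fun h ρ hρ => ?_, fun h ρ θ ψ hρ hθ₀ hθ _ _ => ?_⟩
  · obtain ⟨θ, hθ₀, hθ⟩ : ∃ θ, 0 < θ ∧ θ < π / 4 := ⟨π / 8, by positivity, by linarith [pi_pos]⟩
    have hs : sin θ ≠ 0 := (sin_pos_of_pos_of_lt_pi hθ₀ (by linarith [pi_pos])).ne'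
    have hc : cos θ ≠ 0 := hcos θ hθ₀ (by linarith)
    have hc2 : cos θ ^ 2 - sin θ ^ 2 ≠ 0 := (cos_sq_sub_sin_sq_pos (by linarith) hθ).ne'
    have hS : √(1 - ρ₀ ^ 3 / ρ ^ 3) ≠ 0 :=
      (Real.sqrt_pos.2 (one_sub_div_pow_pos hρ₀.le hρ three_ne_zero)).ne'
    have hρ' : ρ ≠ 0 := (hρ₀.trans hρ).ne'
    obtain ⟨h₁, h₂⟩ := h ρ θ θ hρ hθ₀ (by linarith) hθ₀ (by linarith [pi_pos])
    rw [pairingF_schwarzschild_cos_cos _ _ hρ₀.le hρ hc] at h₁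
    rw [pairingF_schwarzschild_cos_sq_sub_sin_sq _ _ hρ₀.le hρ hc] at h₂
    rw [mul_div_eq_eight_mul_pow_div_iff hρ₀ hρ (hb₁0 ρ hρ),
      div_eq_eight_mul_pow_div_iff hρ₀ hρ (hb₂0 ρ hρ)]
    exact ⟨(mul_eq_zero.1 h₁).resolve_left (by simp [hs, hc, hS, hρ']),
      (mul_eq_zero.1 h₂).resolve_left (by simp [hs, hc, hc2, hS, hρ'])⟩
  · obtain ⟨h₁, h₂⟩ := h ρ hρ
    rw [mul_div_eq_eight_mul_pow_div_iff hρ₀ hρ (hb₁0 ρ hρ)] at h₁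
    rw [div_eq_eight_mul_pow_div_iff hρ₀ hρ (hb₂0 ρ hρ)] at h₂
    rw [pairingF_schwarzschild_cos_cos _ _ hρ₀.le hρ (hcos θ hθ₀ hθ),
      pairingF_schwarzschild_cos_sq_sub_sin_sq _ _ hρ₀.le hρ (hcos θ hθ₀ hθ), h₁, h₂, mul_zero,
      mul_zero, and_self]

/-- For the six-dimensional Schwarzschild–Tangherlini black hole, the ansatz
`z¹ = b₁(ρ) cos θ cos ψ`, `z² = b₂(ρ) cos 2θ` satisfies the orthogonality conditions
`⟨∇r, ∇z^α⟩ = 0` on all of `V` if and only if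
`2 b₁′/b₁ = b₂′/b₂ = 8ρ³/(4ρ⁴ − ρρ₀³)` on `(ρ₀, ∞)`. -/
theorem stmt_7 (ρ₀ : ℝ) (hρ₀ : 0 < ρ₀) (b₁ b₂ : ℝ → ℝ)
    (hb₁d : ∀ ρ, ρ₀ < ρ → DifferentiableAt ℝ b₁ ρ)
    (hb₂d : ∀ ρ, ρ₀ < ρ → DifferentiableAt ℝ b₂ ρ)
    (hb₁0 : ∀ ρ, ρ₀ < ρ → b₁ ρ ≠ 0)
    (hb₂0 : ∀ ρ, ρ₀ < ρ → b₂ ρ ≠ 0) :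
    (∀ ρ θ ψ : ℝ, ρ₀ < ρ → 0 < θ → θ < π / 2 → 0 < ψ → ψ < π →
      pairingF (fun ρ => 1 - ρ₀ ^ 3 / ρ ^ 3)
          (fun ρ θ ψ => ρ ^ 2 * Real.sqrt (1 - ρ₀ ^ 3 / ρ ^ 3) * sin θ * cos θ * sin ψ)
          (fun ρ θ ψ => b₁ ρ * cos θ * cos ψ) ρ θ ψ = 0 ∧
      pairingF (fun ρ => 1 - ρ₀ ^ 3 / ρ ^ 3)
          (fun ρ θ ψ => ρ ^ 2 * Real.sqrt (1 - ρ₀ ^ 3 / ρ ^ 3) * sin θ * cos θ * sin ψ)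
          (fun ρ θ _ => b₂ ρ * ((cos θ) ^ 2 - (sin θ) ^ 2)) ρ θ ψ = 0)
    ↔ (∀ ρ, ρ₀ < ρ →
        2 * deriv b₁ ρ / b₁ ρ = 8 * ρ ^ 3 / (4 * ρ ^ 4 - ρ * ρ₀ ^ 3) ∧
        deriv b₂ ρ / b₂ ρ = 8 * ρ ^ 3 / (4 * ρ ^ 4 - ρ * ρ₀ ^ 3)) :=
  stmt_7_general ρ₀ hρ₀ b₁ b₂ hb₁0 hb₂0
end

section
/- Let ρ₀ > 0, f(ρ) = 1 − ρ₀³/ρ³, and define on V = {(ρ,θ,ψ) : ρ > ρ₀, 0 < θ < π/2, 0 < ψ < π} the functions r = ρ² √(f(ρ)) sin θ cos θ sin ψ, z¹ = ρ (1 − ρ₀³/(4ρ³))^{1/3} cos θ cos ψ, and z² = ½ ρ² (1 − ρ₀³/(4ρ³))^{2/3} (cos²θ − sin²θ). With the pairing ⟨∇u,∇v⟩ = f(ρ)(∂_ρ u)(∂_ρ v) + ρ⁻²(∂_θ u)(∂_θ v) + ρ⁻² cos⁻²θ (∂_ψ u)(∂_ψ v), one has at every point of V the identity ⟨∇z¹,∇z¹⟩·⟨∇z²,∇z²⟩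 − ⟨∇z¹,∇z²⟩² = ⟨∇r,∇r⟩. -/
/-!
Write `k = ρ₀³`, `f = 1 - k/ρ³` and `A = (1 - k/(4ρ³))^{1/3}` (`warp k ρ`). The radial profiles
satisfy `(ρA)³ = ρ³ - k/4` and `(ρ²√f)² = ρ⁴ - kρ`, so `∂ρ z¹ = A⁻² cos θ cos ψ`,
`∂ρ z² = (ρ/A)(cos²θ - sin²θ)` and `∂ρ r = (2ρA³/√f) sin θ cos θ sin ψ`. In the pairings the terms
in `f²/A⁶` cancel inside the Gram determinant, those in `A⁶` match the ones of `⟨∇r,∇r⟩`, and the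
difference left over is `ρ² f sin²θ cos²ψ ((sin²θ + cos²θ)² - 1) = 0`.
-/

open Real

namespace Tangherlini

noncomputable def blackening (k : ℝ) : ℝ → ℝ := fun ρ => 1 - k / ρ ^ 3

noncomputable def warp (k ρ : ℝ) : ℝ := (1 - k / (4 * ρ ^ 3)) ^ ((1 : ℝ) / 3)

noncomputable def z₁ (k : ℝ) : ℝ → ℝ → ℝ → ℝ :=
  fun ρ θ ψ => ρ * (1 - k / (4 * ρ ^ 3)) ^ ((1 : ℝ) / 3) * cos θ * cos ψ

noncomputable def z₂ (k : ℝ) : ℝ → ℝ → ℝ → ℝ :=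
  fun ρ θ _ => (1 / 2) * ρ ^ 2 * (1 - k / (4 * ρ ^ 3)) ^ ((2 : ℝ) / 3) *
    ((cos θ) ^ 2 - (sin θ) ^ 2)

noncomputable def r (k : ℝ) : ℝ → ℝ → ℝ → ℝ :=
  fun ρ θ ψ => ρ ^ 2 * √(1 - k / ρ ^ 3) * sin θ * cos θ * sin ψ

variable {k ρ : ℝ}

lemma one_sub_div_four_pos (hF : 0 < 1 - k / ρ ^ 3) : 0 < 1 - k / (4 * ρ ^ 3) := by
  rw [mul_comm, ← div_div]
  linarith

lemma warp_pos (hg : 0 < 1 - k / (4 * ρ ^ 3)) : 0 < warp k ρ :=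
  rpow_pos_of_pos hg _

lemma rpow_two_thirds_eq_warp_sq (hg : 0 ≤ 1 - k / (4 * ρ ^ 3)) :
    (1 - k / (4 * ρ ^ 3)) ^ ((2 : ℝ) / 3) = warp k ρ ^ 2 := by
  rw [warp, ← rpow_mul_natCast hg]
  norm_num

lemma mul_warp_pow_three (hρ : ρ ≠ 0) (hg : 0 ≤ 1 - k / (4 * ρ ^ 3)) :
    (ρ * warp k ρ) ^ 3 = ρ ^ 3 - k / 4 := by
  rw [mul_pow, warp, ← rpow_mul_natCast hg]
  norm_num
  field_simp

lemma hasDerivAt_one_sub_div_four_pow_three (hρ : ρ ≠ 0) :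
    HasDerivAt (fun x => 1 - k / (4 * x ^ 3)) (3 * k / (4 * ρ ^ 4)) ρ := by
  refine (((hasDerivAt_const ρ k).div ((hasDerivAt_pow 3 ρ).const_mul 4)
    (by positivity)).const_sub 1).congr_deriv ?_
  field_simp
  ring

lemma hasDerivAt_blackening (hρ : ρ ≠ 0) : HasDerivAt (blackening k) (3 * k / ρ ^ 4) ρ := by
  refine (((hasDerivAt_const ρ k).div (hasDerivAt_pow 3 ρ)
    (by positivity)).const_sub 1).congr_deriv ?_
  field_simp
  ring

lemma hasDerivAt_mul_warp (hρ : ρ ≠ 0) (hg : 0 < 1 - k / (4 * ρ ^ 3)) :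
    HasDerivAt (fun x => x * (1 - k / (4 * x ^ 3)) ^ ((1 : ℝ) / 3)) (warp k ρ ^ 2)⁻¹ ρ := by
  refine ((hasDerivAt_id' ρ).mul ((hasDerivAt_one_sub_div_four_pow_three hρ).rpow_const
    (Or.inl hg.ne'))).congr_deriv ?_
  rw [show (1 : ℝ) / 3 - 1 = -(2 / 3) by norm_num, rpow_neg hg.le,
    rpow_two_thirds_eq_warp_sq hg.le, ← warp]
  have hA := (warp_pos hg).ne'
  field_simp
  linear_combination 4 * mul_warp_pow_three hρ hg.le

lemma hasDerivAt_half_sq_mul_warp_sq (hρ : ρ ≠ 0) (hg : 0 < 1 - k / (4 * ρ ^ 3)) :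
    HasDerivAt (fun x => 1 / 2 * x ^ 2 * (1 - k / (4 * x ^ 3)) ^ ((2 : ℝ) / 3))
      (ρ / warp k ρ) ρ := by
  refine (((hasDerivAt_pow 2 ρ).const_mul (1 / 2)).mul
    ((hasDerivAt_one_sub_div_four_pow_three hρ).rpow_const (Or.inl hg.ne'))).congr_deriv ?_
  rw [show (2 : ℝ) / 3 - 1 = -(1 / 3) by norm_num, rpow_neg hg.le,
    rpow_two_thirds_eq_warp_sq hg.le, ← warp]
  have hA := (warp_pos hg).ne'
  field_simp
  linear_combination 8 * mul_warp_pow_three hρ hg.le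

lemma hasDerivAt_sq_mul_sqrt_blackening (hρ : ρ ≠ 0) (hF : 0 < 1 - k / ρ ^ 3) :
    HasDerivAt (fun x => x ^ 2 * √(1 - k / x ^ 3))
      (2 * ρ * warp k ρ ^ 3 / √(1 - k / ρ ^ 3)) ρ := by
  refine ((hasDerivAt_pow 2 ρ).mul
    ((hasDerivAt_blackening hρ).sqrt hF.ne')).congr_deriv ?_
  have hA := mul_warp_pow_three hρ (one_sub_div_four_pos hF).le
  have hs := sqrt_pos.2 hF
  have hs2 : ρ ^ 3 * √(1 - k / ρ ^ 3) ^ 2 = ρ ^ 3 - k := by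
    rw [sq_sqrt hF.le]
    field_simp
  simp only [blackening]
  generalize √(1 - k / ρ ^ 3) = s at hs hs2 ⊢
  field_simp
  linear_combination 4 * hs2 - 4 * hA

variable {θ ψ : ℝ}

lemma pd1_z₁ (hρ : ρ ≠ 0) (hg : 0 < 1 - k / (4 * ρ ^ 3)) :
    pd1 (z₁ k) ρ θ ψ = (warp k ρ ^ 2)⁻¹ * cos θ * cos ψ :=
  (((hasDerivAt_mul_warp hρ hg).mul_const (cos θ)).mul_const (cos ψ)).deriv

lemma pd2_z₁ : pd2 (z₁ k) ρ θ ψ = -(ρ * warp k ρ * sin θ * cos ψ) :=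
  (((hasDerivAt_cos θ).const_mul (ρ * warp k ρ)).mul_const (cos ψ)).deriv.trans (by ring)

lemma pd3_z₁ : pd3 (z₁ k) ρ θ ψ = -(ρ * warp k ρ * cos θ * sin ψ) :=
  ((hasDerivAt_cos ψ).const_mul (ρ * warp k ρ * cos θ)).deriv.trans (by ring)

lemma pd1_z₂ (hρ : ρ ≠ 0) (hg : 0 < 1 - k / (4 * ρ ^ 3)) :
    pd1 (z₂ k) ρ θ ψ = ρ / warp k ρ * (cos θ ^ 2 - sin θ ^ 2) :=
  ((hasDerivAt_half_sq_mul_warp_sq hρ hg).mul_const _).deriv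

lemma pd2_z₂ (hg : 0 ≤ 1 - k / (4 * ρ ^ 3)) :
    pd2 (z₂ k) ρ θ ψ = -(2 * ρ ^ 2 * warp k ρ ^ 2 * sin θ * cos θ) := by
  have h := (((hasDerivAt_cos θ).pow 2).sub ((hasDerivAt_sin θ).pow 2)).const_mul
    (1 / 2 * ρ ^ 2 * warp k ρ ^ 2)
  rw [pd2]
  simp only [z₂]
  rw [rpow_two_thirds_eq_warp_sq hg]
  exact h.deriv.trans (by ring)

lemma pd3_z₂ : pd3 (z₂ k) ρ θ ψ = 0 :=
  deriv_const ψ _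

lemma pd1_r (hρ : ρ ≠ 0) (hF : 0 < 1 - k / ρ ^ 3) :
    pd1 (r k) ρ θ ψ = 2 * ρ * warp k ρ ^ 3 / √(1 - k / ρ ^ 3) * sin θ * cos θ * sin ψ :=
  ((((hasDerivAt_sq_mul_sqrt_blackening hρ hF).mul_const (sin θ)).mul_const (cos θ)).mul_const
    (sin ψ)).deriv

lemma pd2_r : pd2 (r k) ρ θ ψ = ρ ^ 2 * √(1 - k / ρ ^ 3) * (cos θ ^ 2 - sin θ ^ 2) * sin ψ :=
  ((((hasDerivAt_sin θ).const_mul (ρ ^ 2 * √(1 - k / ρ ^ 3))).mul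
    (hasDerivAt_cos θ)).mul_const (sin ψ)).deriv.trans (by ring)

lemma pd3_r : pd3 (r k) ρ θ ψ = ρ ^ 2 * √(1 - k / ρ ^ 3) * sin θ * cos θ * cos ψ :=
  ((hasDerivAt_sin ψ).const_mul (ρ ^ 2 * √(1 - k / ρ ^ 3) * sin θ * cos θ)).deriv

lemma pairingF_z₁_z₁ (hρ : ρ ≠ 0) (hg : 0 < 1 - k / (4 * ρ ^ 3)) (hc : cos θ ≠ 0) :
    pairingF (blackening k) (z₁ k) (z₁ k) ρ θ ψ =
      blackening k ρ / warp k ρ ^ 4 * cos θ ^ 2 * cos ψ ^ 2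
        + warp k ρ ^ 2 * (sin θ ^ 2 * cos ψ ^ 2 + sin ψ ^ 2) := by
  have hA := (warp_pos hg).ne'
  rw [pairingF, pd1_z₁ hρ hg, pd2_z₁, pd3_z₁]
  field_simp
  ring

lemma pairingF_z₂_z₂ (hρ : ρ ≠ 0) (hg : 0 < 1 - k / (4 * ρ ^ 3)) :
    pairingF (blackening k) (z₂ k) (z₂ k) ρ θ ψ =
      ρ ^ 2 * (blackening k ρ / warp k ρ ^ 2 * (cos θ ^ 2 - sin θ ^ 2) ^ 2
        + 4 * warp k ρ ^ 4 * sin θ ^ 2 * cos θ ^ 2) := by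
  have hA := (warp_pos hg).ne'
  rw [pairingF, pd1_z₂ hρ hg, pd2_z₂ hg.le, pd3_z₂]
  field_simp
  ring

lemma pairingF_z₁_z₂ (hρ : ρ ≠ 0) (hg : 0 < 1 - k / (4 * ρ ^ 3)) :
    pairingF (blackening k) (z₁ k) (z₂ k) ρ θ ψ =
      ρ * (blackening k ρ / warp k ρ ^ 3 * cos θ * cos ψ * (cos θ ^ 2 - sin θ ^ 2)
        + 2 * warp k ρ ^ 3 * sin θ ^ 2 * cos θ * cos ψ) := by
  have hA := (warp_pos hg).ne'
  rw [pairingF, pd1_z₁ hρ hg, pd2_z₁, pd3_z₁, pd1_z₂ hρ hg, pd2_z₂ hg.le, pd3_z₂, mul_zero,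
    mul_zero, add_zero]
  field_simp

lemma pairingF_r_r (hρ : ρ ≠ 0) (hF : 0 < 1 - k / ρ ^ 3) (hc : cos θ ≠ 0) :
    pairingF (blackening k) (r k) (r k) ρ θ ψ =
      ρ ^ 2 * (4 * warp k ρ ^ 6 * sin θ ^ 2 * cos θ ^ 2 * sin ψ ^ 2
        + blackening k ρ * ((cos θ ^ 2 - sin θ ^ 2) ^ 2 * sin ψ ^ 2
          + sin θ ^ 2 * cos ψ ^ 2)) := by
  have hs := (sqrt_pos.2 hF).ne'
  have hs2 : √(1 - k / ρ ^ 3) ^ 2 = blackening k ρ := sq_sqrt hF.le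
  rw [pairingF, pd1_r hρ hF, pd2_r, pd3_r, ← hs2]
  generalize √(1 - k / ρ ^ 3) = s at hs ⊢
  field_simp
  ring

end Tangherlini

open Tangherlini

theorem stmt_8_general (ρ₀ : ℝ) (hρ₀ : 0 < ρ₀) (ρ θ ψ : ℝ) (hρ : ρ₀ < ρ)
    (hθ0 : 0 < θ) (hθ1 : θ < π / 2) :
    pairingF (fun ρ => 1 - ρ₀ ^ 3 / ρ ^ 3)
        (fun ρ θ ψ => ρ * (1 - ρ₀ ^ 3 / (4 * ρ ^ 3)) ^ ((1 : ℝ) / 3) * cos θ * cos ψ)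
        (fun ρ θ ψ => ρ * (1 - ρ₀ ^ 3 / (4 * ρ ^ 3)) ^ ((1 : ℝ) / 3) * cos θ * cos ψ) ρ θ ψ *
      pairingF (fun ρ => 1 - ρ₀ ^ 3 / ρ ^ 3)
        (fun ρ θ _ => (1 / 2) * ρ ^ 2 * (1 - ρ₀ ^ 3 / (4 * ρ ^ 3)) ^ ((2 : ℝ) / 3) *
          ((cos θ) ^ 2 - (sin θ) ^ 2))
        (fun ρ θ _ => (1 / 2) * ρ ^ 2 * (1 - ρ₀ ^ 3 / (4 * ρ ^ 3)) ^ ((2 : ℝ) / 3) *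
          ((cos θ) ^ 2 - (sin θ) ^ 2)) ρ θ ψ -
      (pairingF (fun ρ => 1 - ρ₀ ^ 3 / ρ ^ 3)
        (fun ρ θ ψ => ρ * (1 - ρ₀ ^ 3 / (4 * ρ ^ 3)) ^ ((1 : ℝ) / 3) * cos θ * cos ψ)
        (fun ρ θ _ => (1 / 2) * ρ ^ 2 * (1 - ρ₀ ^ 3 / (4 * ρ ^ 3)) ^ ((2 : ℝ) / 3) *
          ((cos θ) ^ 2 - (sin θ) ^ 2)) ρ θ ψ) ^ 2
      = pairingF (fun ρ => 1 - ρ₀ ^ 3 / ρ ^ 3)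
          (fun ρ θ ψ => ρ ^ 2 * Real.sqrt (1 - ρ₀ ^ 3 / ρ ^ 3) * sin θ * cos θ * sin ψ)
          (fun ρ θ ψ => ρ ^ 2 * Real.sqrt (1 - ρ₀ ^ 3 / ρ ^ 3) * sin θ * cos θ * sin ψ)
          ρ θ ψ := by
  have hρ' : ρ ≠ 0 := (hρ₀.trans hρ).ne'
  have hF : 0 < 1 - ρ₀ ^ 3 / ρ ^ 3 := by
    rw [sub_pos, div_lt_one (pow_pos (hρ₀.trans hρ) 3)]
    exact pow_lt_pow_left₀ hρ hρ₀.le three_ne_zero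
  have hg := one_sub_div_four_pos hF
  have hc : cos θ ≠ 0 := (cos_pos_of_mem_Ioo ⟨by linarith [pi_pos], hθ1⟩).ne'
  change pairingF (blackening _) (z₁ _) (z₁ _) ρ θ ψ * pairingF (blackening _) (z₂ _) (z₂ _) ρ θ ψ
      - pairingF (blackening _) (z₁ _) (z₂ _) ρ θ ψ ^ 2 = pairingF (blackening _) (r _) (r _) ρ θ ψ
  rw [pairingF_z₁_z₁ hρ' hg hc, pairingF_z₂_z₂ hρ' hg, pairingF_z₁_z₂ hρ' hg,
    pairingF_r_r hρ' hF hc]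
  have hA := (warp_pos hg).ne'
  field_simp
  linear_combination (blackening _ ρ * sin θ ^ 2 * cos ψ ^ 2 * warp _ ρ ^ 6
    * (sin θ ^ 2 + cos θ ^ 2 + 1)) * sin_sq_add_cos_sq θ

/-- The Gram determinant identity (`λ = 1`) for the canonical coordinates of the
six-dimensional Schwarzschild–Tangherlini black hole. -/
theorem stmt_8 (ρ₀ : ℝ) (hρ₀ : 0 < ρ₀) (ρ θ ψ : ℝ) (hρ : ρ₀ < ρ)
    (hθ0 : 0 < θ) (hθ1 : θ < π / 2) (hψ0 : 0 < ψ) (hψ1 : ψ < π) :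
    pairingF (fun ρ => 1 - ρ₀ ^ 3 / ρ ^ 3)
        (fun ρ θ ψ => ρ * (1 - ρ₀ ^ 3 / (4 * ρ ^ 3)) ^ ((1 : ℝ) / 3) * cos θ * cos ψ)
        (fun ρ θ ψ => ρ * (1 - ρ₀ ^ 3 / (4 * ρ ^ 3)) ^ ((1 : ℝ) / 3) * cos θ * cos ψ) ρ θ ψ *
      pairingF (fun ρ => 1 - ρ₀ ^ 3 / ρ ^ 3)
        (fun ρ θ _ => (1 / 2) * ρ ^ 2 * (1 - ρ₀ ^ 3 / (4 * ρ ^ 3)) ^ ((2 : ℝ) / 3) *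
          ((cos θ) ^ 2 - (sin θ) ^ 2))
        (fun ρ θ _ => (1 / 2) * ρ ^ 2 * (1 - ρ₀ ^ 3 / (4 * ρ ^ 3)) ^ ((2 : ℝ) / 3) *
          ((cos θ) ^ 2 - (sin θ) ^ 2)) ρ θ ψ -
      (pairingF (fun ρ => 1 - ρ₀ ^ 3 / ρ ^ 3)
        (fun ρ θ ψ => ρ * (1 - ρ₀ ^ 3 / (4 * ρ ^ 3)) ^ ((1 : ℝ) / 3) * cos θ * cos ψ)
        (fun ρ θ _ => (1 / 2) * ρ ^ 2 * (1 - ρ₀ ^ 3 / (4 * ρ ^ 3)) ^ ((2 : ℝ) / 3) *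
          ((cos θ) ^ 2 - (sin θ) ^ 2)) ρ θ ψ) ^ 2
      = pairingF (fun ρ => 1 - ρ₀ ^ 3 / ρ ^ 3)
          (fun ρ θ ψ => ρ ^ 2 * Real.sqrt (1 - ρ₀ ^ 3 / ρ ^ 3) * sin θ * cos θ * sin ψ)
          (fun ρ θ ψ => ρ ^ 2 * Real.sqrt (1 - ρ₀ ^ 3 / ρ ^ 3) * sin θ * cos θ * sin ψ)
          ρ θ ψ :=
  stmt_8_general ρ₀ hρ₀ ρ θ ψ hρ hθ0 hθ1
end

section
/- Define on the region U = {(ρ,θ,ψ) : ρ > 0, 0 < θ < π/2, 0 < ψ < π/2} the functions r(ρ,θ,ψ) = ρ³ sin θ cos²θ sin ψ cos ψ, z¹(ρ,θ,ψ) = ½ ρ² cos²θ (cos²ψ − sin²ψ), and z²(ρ,θ,ψ) = ¼ ρ² (3cos²θ − 2). Then for α = 1, 2 and all (ρ,θ,ψ) ∈ U one has ⟨∇r, ∇z^α⟩ = 0, where ⟨∇u, ∇v⟩ = (∂_ρ u)(∂_ρ v) + ρ⁻²(∂_θ u)(∂_θ v) + ρ⁻² cos⁻²θ (∂_ψ u)(∂_ψ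 v). -/
open Real

/-!
Away from `ρ = 0` and `cos θ = 0`, multiplying the pairing by `ρ² cos²θ` clears the inverse
metric coefficients, so orthogonality becomes a polynomial identity in `ρ`, `sin`, `cos` of the
explicit partial derivatives; both identities then reduce to `sin²θ + cos²θ = 1`.
-/

theorem pairing_eq_zero_iff (u v : ℝ → ℝ → ℝ → ℝ) {ρ θ ψ : ℝ} (hρ : ρ ≠ 0) (hθ : cos θ ≠ 0) :
    pairing u v ρ θ ψ = 0 ↔
      ρ ^ 2 * cos θ ^ 2 * (pd1 u ρ θ ψ * pd1 v ρ θ ψ) + cos θ ^ 2 * (pd2 u ρ θ ψ * pd2 v ρ θ ψ)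
        + pd3 u ρ θ ψ * pd3 v ρ θ ψ = 0 := by
  have hscaled : ρ ^ 2 * cos θ ^ 2 * pairing u v ρ θ ψ =
      ρ ^ 2 * cos θ ^ 2 * (pd1 u ρ θ ψ * pd1 v ρ θ ψ) + cos θ ^ 2 * (pd2 u ρ θ ψ * pd2 v ρ θ ψ)
        + pd3 u ρ θ ψ * pd3 v ρ θ ψ := by
    rw [pairing]
    field_simp
  rw [← hscaled, mul_eq_zero_iff_left (by positivity)]

namespace MinkowskiSeven

noncomputable def r (ρ θ ψ : ℝ) : ℝ := ρ ^ 3 * sin θ * (cos θ) ^ 2 * sin ψ * cos ψ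

noncomputable def z₁ (ρ θ ψ : ℝ) : ℝ := (1 / 2) * ρ ^ 2 * (cos θ) ^ 2 * ((cos ψ) ^ 2 - (sin ψ) ^ 2)

noncomputable def z₂ (ρ θ _ : ℝ) : ℝ := (1 / 4) * ρ ^ 2 * (3 * (cos θ) ^ 2 - 2)

variable (ρ θ ψ : ℝ)

theorem pd1_r : pd1 r ρ θ ψ = 3 * ρ ^ 2 * sin θ * cos θ ^ 2 * sin ψ * cos ψ :=
  (((((hasDerivAt_pow 3 ρ).mul_const (sin θ)).mul_const (cos θ ^ 2)).mul_const
    (sin ψ)).mul_const (cos ψ)).deriv.trans <| by ring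

theorem pd2_r :
    pd2 r ρ θ ψ = ρ ^ 3 * (cos θ ^ 3 - 2 * sin θ ^ 2 * cos θ) * sin ψ * cos ψ :=
  (((((hasDerivAt_sin θ).const_mul (ρ ^ 3)).mul ((hasDerivAt_cos θ).pow 2)).mul_const
    (sin ψ)).mul_const (cos ψ)).deriv.trans <| by simp only [Pi.pow_apply]; ring

theorem pd3_r : pd3 r ρ θ ψ = ρ ^ 3 * sin θ * cos θ ^ 2 * (cos ψ ^ 2 - sin ψ ^ 2) :=
  (((hasDerivAt_sin ψ).const_mul (ρ ^ 3 * sin θ * cos θ ^ 2)).mul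
    (hasDerivAt_cos ψ)).deriv.trans <| by ring

theorem pd1_z₁ : pd1 z₁ ρ θ ψ = ρ * cos θ ^ 2 * (cos ψ ^ 2 - sin ψ ^ 2) :=
  ((((hasDerivAt_pow 2 ρ).const_mul (1 / 2 : ℝ)).mul_const (cos θ ^ 2)).mul_const
    (cos ψ ^ 2 - sin ψ ^ 2)).deriv.trans <| by ring

theorem pd2_z₁ : pd2 z₁ ρ θ ψ = -(ρ ^ 2 * sin θ * cos θ * (cos ψ ^ 2 - sin ψ ^ 2)) :=
  ((((hasDerivAt_cos θ).pow 2).const_mul ((1 / 2 : ℝ) * ρ ^ 2)).mul_const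
    (cos ψ ^ 2 - sin ψ ^ 2)).deriv.trans <| by ring

theorem pd3_z₁ : pd3 z₁ ρ θ ψ = -(2 * ρ ^ 2 * cos θ ^ 2 * sin ψ * cos ψ) :=
  ((((hasDerivAt_cos ψ).pow 2).sub ((hasDerivAt_sin ψ).pow 2)).const_mul
    ((1 / 2 : ℝ) * ρ ^ 2 * cos θ ^ 2)).deriv.trans <| by ring

theorem pd1_z₂ : pd1 z₂ ρ θ ψ = (1 / 2) * ρ * (3 * cos θ ^ 2 - 2) :=
  (((hasDerivAt_pow 2 ρ).const_mul (1 / 4 : ℝ)).mul_const (3 * cos θ ^ 2 - 2)).deriv.trans <|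
    by ring

theorem pd2_z₂ : pd2 z₂ ρ θ ψ = -(3 / 2 * ρ ^ 2 * sin θ * cos θ) :=
  (((((hasDerivAt_cos θ).pow 2).const_mul (3 : ℝ)).sub_const 2).const_mul
    ((1 / 4 : ℝ) * ρ ^ 2)).deriv.trans <| by ring

theorem pd3_z₂ : pd3 z₂ ρ θ ψ = 0 :=
  deriv_const ψ _

variable {ρ θ}

theorem pairing_r_z₁ (hρ : ρ ≠ 0) (hθ : cos θ ≠ 0) : pairing r z₁ ρ θ ψ = 0 := by
  rw [pairing_eq_zero_iff r z₁ hρ hθ, pd1_r, pd2_r, pd3_r, pd1_z₁, pd2_z₁, pd3_z₁]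
  linear_combination (2 * ρ ^ 5 * sin θ * cos θ ^ 4 * sin ψ * cos ψ * (cos ψ ^ 2 - sin ψ ^ 2))
    * sin_sq_add_cos_sq θ

theorem pairing_r_z₂ (hρ : ρ ≠ 0) (hθ : cos θ ≠ 0) : pairing r z₂ ρ θ ψ = 0 := by
  rw [pairing_eq_zero_iff r z₂ hρ hθ, pd1_r, pd2_r, pd3_r, pd1_z₂, pd2_z₂, pd3_z₂]
  linear_combination (3 * ρ ^ 5 * sin θ * cos θ ^ 4 * sin ψ * cos ψ) * sin_sq_add_cos_sq θ

end MinkowskiSeven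

theorem stmt_12_general (ρ θ ψ : ℝ) (hρ : 0 < ρ) (hθ0 : 0 < θ) (hθ1 : θ < π / 2) :
    pairing (fun ρ θ ψ => ρ ^ 3 * sin θ * (cos θ) ^ 2 * sin ψ * cos ψ)
        (fun ρ θ ψ => (1 / 2) * ρ ^ 2 * (cos θ) ^ 2 * ((cos ψ) ^ 2 - (sin ψ) ^ 2)) ρ θ ψ = 0 ∧
    pairing (fun ρ θ ψ => ρ ^ 3 * sin θ * (cos θ) ^ 2 * sin ψ * cos ψ)
        (fun ρ θ _ => (1 / 4) * ρ ^ 2 * (3 * (cos θ) ^ 2 - 2)) ρ θ ψ = 0 := by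
  have hcos : cos θ ≠ 0 := (cos_pos_of_mem_Ioo ⟨by linarith [pi_pos], hθ1⟩).ne'
  exact ⟨MinkowskiSeven.pairing_r_z₁ ψ hρ.ne' hcos, MinkowskiSeven.pairing_r_z₂ ψ hρ.ne' hcos⟩

/-- Orthogonality `⟨∇r, ∇z^α⟩ = 0`, `α = 1,2`, for the canonical coordinates of
seven-dimensional Minkowski space. -/
theorem stmt_12 (ρ θ ψ : ℝ) (hρ : 0 < ρ) (hθ0 : 0 < θ) (hθ1 : θ < π / 2)
    (hψ0 : 0 < ψ) (hψ1 : ψ < π / 2) :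
    pairing (fun ρ θ ψ => ρ ^ 3 * sin θ * (cos θ) ^ 2 * sin ψ * cos ψ)
        (fun ρ θ ψ => (1 / 2) * ρ ^ 2 * (cos θ) ^ 2 * ((cos ψ) ^ 2 - (sin ψ) ^ 2)) ρ θ ψ = 0 ∧
    pairing (fun ρ θ ψ => ρ ^ 3 * sin θ * (cos θ) ^ 2 * sin ψ * cos ψ)
        (fun ρ θ _ => (1 / 4) * ρ ^ 2 * (3 * (cos θ) ^ 2 - 2)) ρ θ ψ = 0 :=
  stmt_12_general ρ θ ψ hρ hθ0 hθ1
end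

section
/- Fix real numbers k, l, C and define on U'' = {(ρ,θ,ψ) : ρ > 0, 0 < θ < π/2, 3cos²θ − 2 > 0, 0 < ψ < π/4} the functions r = ρ³ sin θ cos²θ sin ψ cos ψ and z = C ρ^k (cos θ)^{2l} (3cos²θ − 2)^{k/2 − l} (cos²ψ − sin²ψ)^{l}. Then for all (ρ,θ,ψ) ∈ U'', ⟨∇r, ∇z⟩ = 0, where ⟨∇u, ∇v⟩ = (∂_ρ u)(∂_ρ v) + ρ⁻²(∂_θ u)(∂_θ v) + ρ⁻² cos⁻²θ (∂_ψ u)(∂_ψ v). -/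
open Real

/-! Both `r` and `z` are products `f₁(ρ) f₂(θ) f₃(ψ)`, so each partial derivative hits one
factor only, and `ρ² ⟨∇r, ∇z⟩ / (r z)` is a sum of products of logarithmic derivatives:
`3k + (3cos²θ − 2)/(sin θ cos θ) · (−2l tan θ − 6(k/2 − l) sin θ cos θ/(3cos²θ − 2)) − 4l/cos²θ`,
which vanishes identically. -/

theorem HasDerivAt.rpow_const_of_ne_zero {f : ℝ → ℝ} {f' x : ℝ} (p : ℝ) (hf : HasDerivAt f f' x)
    (hx : f x ≠ 0) : HasDerivAt (fun y => f y ^ p) (f x ^ p * (p * f' / f x)) x :=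
  (hf.rpow_const (Or.inl hx)).congr_deriv (by rw [rpow_sub_one hx]; ring)

theorem hasDerivAt_sin_mul_cos (x : ℝ) :
    HasDerivAt (fun y => sin y * cos y) (cos x ^ 2 - sin x ^ 2) x :=
  ((hasDerivAt_sin x).fun_mul (hasDerivAt_cos x)).congr_deriv (by ring)

theorem hasDerivAt_sin_mul_cos_sq (x : ℝ) :
    HasDerivAt (fun y => sin y * cos y ^ 2) (cos x * (3 * cos x ^ 2 - 2)) x :=
  ((hasDerivAt_sin x).fun_mul ((hasDerivAt_cos x).fun_pow 2)).congr_deriv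
    (by push_cast; linear_combination (-2 * cos x) * sin_sq_add_cos_sq x)

theorem hasDerivAt_cos_sq_sub_sin_sq (x : ℝ) :
    HasDerivAt (fun y => cos y ^ 2 - sin y ^ 2) (-4 * sin x * cos x) x :=
  (((hasDerivAt_cos x).fun_pow 2).fun_sub ((hasDerivAt_sin x).fun_pow 2)).congr_deriv
    (by push_cast; ring)

theorem hasDerivAt_three_mul_cos_sq_sub_two (x : ℝ) :
    HasDerivAt (fun y => 3 * cos y ^ 2 - 2) (-6 * sin x * cos x) x :=
  ((((hasDerivAt_cos x).fun_pow 2).const_mul 3).sub_const 2).congr_deriv (by push_cast; ring)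

section Separable

variable {f₁ f₂ f₃ : ℝ → ℝ} {a ρ θ ψ : ℝ}

theorem pd1_mul_mul_s15 (g₂ g₃ : ℝ → ℝ) (h : HasDerivAt f₁ a ρ) :
    pd1 (fun x y z => f₁ x * g₂ y * g₃ z) ρ θ ψ = a * g₂ θ * g₃ ψ :=
  ((h.mul_const _).mul_const _).deriv

theorem pd2_mul_mul_s15 (g₁ g₃ : ℝ → ℝ) (h : HasDerivAt f₂ a θ) :
    pd2 (fun x y z => g₁ x * f₂ y * g₃ z) ρ θ ψ = g₁ ρ * a * g₃ ψ :=
  ((h.const_mul _).mul_const _).deriv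

theorem pd3_mul_mul_s15 (g₁ g₂ : ℝ → ℝ) (h : HasDerivAt f₃ a ψ) :
    pd3 (fun x y z => g₁ x * g₂ y * f₃ z) ρ θ ψ = g₁ ρ * g₂ θ * a :=
  (h.const_mul _).deriv

theorem pairing_mul_mul {u₁ u₂ u₃ v₁ v₂ v₃ : ℝ → ℝ} {u₁' u₂' u₃' v₁' v₂' v₃' : ℝ}
    (hu₁ : HasDerivAt u₁ u₁' ρ) (hu₂ : HasDerivAt u₂ u₂' θ) (hu₃ : HasDerivAt u₃ u₃' ψ)
    (hv₁ : HasDerivAt v₁ v₁' ρ) (hv₂ : HasDerivAt v₂ v₂' θ) (hv₃ : HasDerivAt v₃ v₃' ψ) :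
    pairing (fun x y z => u₁ x * u₂ y * u₃ z) (fun x y z => v₁ x * v₂ y * v₃ z) ρ θ ψ
      = u₁' * u₂ θ * u₃ ψ * (v₁' * v₂ θ * v₃ ψ)
        + (ρ ^ 2)⁻¹ * (u₁ ρ * u₂' * u₃ ψ * (v₁ ρ * v₂' * v₃ ψ))
        + (ρ ^ 2)⁻¹ * (cos θ ^ 2)⁻¹ * (u₁ ρ * u₂ θ * u₃' * (v₁ ρ * v₂ θ * v₃')) := by
  rw [pairing, pd1_mul_mul_s15 _ _ hu₁, pd1_mul_mul_s15 _ _ hv₁, pd2_mul_mul_s15 _ _ hu₂, pd2_mul_mul_s15 _ _ hv₂,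
    pd3_mul_mul_s15 _ _ hu₃, pd3_mul_mul_s15 _ _ hv₃]

end Separable

theorem stmt_15_general (k l C : ℝ) (ρ θ ψ : ℝ) (hρ : 0 < ρ)
    (hθ2 : 3 * (cos θ) ^ 2 - 2 > 0) (hψ0 : 0 < ψ) (hψ1 : ψ < π / 4) :
    pairing (fun ρ θ ψ => ρ ^ 3 * sin θ * (cos θ) ^ 2 * sin ψ * cos ψ)
        (fun ρ θ ψ =>
          C * ρ ^ k * (cos θ) ^ (2 * l) * (3 * (cos θ) ^ 2 - 2) ^ (k / 2 - l) *
            ((cos ψ) ^ 2 - (sin ψ) ^ 2) ^ l)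
        ρ θ ψ = 0 := by
  have hcos : cos θ ≠ 0 := fun h => by norm_num [h] at hθ2
  have hcos2 : 0 < cos ψ ^ 2 - sin ψ ^ 2 := by
    rw [← cos_two_mul']
    exact cos_pos_of_mem_Ioo ⟨by linarith [pi_pos], by linarith⟩
  have hr : (fun ρ θ ψ => ρ ^ 3 * sin θ * (cos θ) ^ 2 * sin ψ * cos ψ)
      = fun x y z => x ^ 3 * (sin y * cos y ^ 2) * (sin z * cos z) := by
    ext; ring
  have hz : (fun ρ θ ψ => C * ρ ^ k * (cos θ) ^ (2 * l) * (3 * (cos θ) ^ 2 - 2) ^ (k / 2 - l) *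
        ((cos ψ) ^ 2 - (sin ψ) ^ 2) ^ l)
      = fun x y z => C * x ^ k * (cos y ^ (2 * l) * (3 * cos y ^ 2 - 2) ^ (k / 2 - l))
          * (cos z ^ 2 - sin z ^ 2) ^ l := by
    ext; ring
  rw [hr, hz, pairing_mul_mul (hasDerivAt_pow 3 ρ) (hasDerivAt_sin_mul_cos_sq θ)
    (hasDerivAt_sin_mul_cos ψ) (((hasDerivAt_id' ρ).rpow_const_of_ne_zero k hρ.ne').const_mul C)
    (((hasDerivAt_cos θ).rpow_const_of_ne_zero (2 * l) hcos).fun_mul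
      ((hasDerivAt_three_mul_cos_sq_sub_two θ).rpow_const_of_ne_zero (k / 2 - l) hθ2.ne'))
    ((hasDerivAt_cos_sq_sub_sin_sq ψ).rpow_const_of_ne_zero l hcos2.ne')]
  push_cast
  field_simp
  ring

/-- For any real constants `k, l, C` the ansatz
`z = C ρ^k (cos θ)^{2l} (3cos²θ − 2)^{k/2 − l} (cos 2ψ)^l` is orthogonal to
`r = ρ³ sin θ cos²θ sin ψ cos ψ` on the region `ρ > 0`, `0 < θ < π/2` with
`3cos²θ − 2 > 0`, and `0 < ψ < π/4`. -/
theorem stmt_15 (k l C : ℝ) (ρ θ ψ : ℝ) (hρ : 0 < ρ) (hθ0 : 0 < θ) (hθ1 : θ < π / 2)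
    (hθ2 : 3 * (cos θ) ^ 2 - 2 > 0) (hψ0 : 0 < ψ) (hψ1 : ψ < π / 4) :
    pairing (fun ρ θ ψ => ρ ^ 3 * sin θ * (cos θ) ^ 2 * sin ψ * cos ψ)
        (fun ρ θ ψ =>
          C * ρ ^ k * (cos θ) ^ (2 * l) * (3 * (cos θ) ^ 2 - 2) ^ (k / 2 - l) *
            ((cos ψ) ^ 2 - (sin ψ) ^ 2) ^ l)
        ρ θ ψ = 0 :=
  stmt_15_general k l C ρ θ ψ hρ hθ2 hψ0 hψ1
end

section
/- Let ρ > 0 and a₁, a₂, a₃, ρ₀, μ₁, μ₂, μ₃ ∈ ℝ. Set Π = (ρ² + a₁²)(ρ² + a₂²)(ρ² + a₃²) and F = 1 − Σ_{i=1}^{3} aᵢ²μᵢ²/(ρ² + aᵢ²), and assume F ≠ 0. Let G be the symmetric 4×4 real matrix with entries G₀₀ = −1 + ρ₀⁴ρ²/(ΠF), G₀ᵢ = Gᵢ₀ = −ρ₀⁴ρ² aᵢ μᵢ²/(ΠF) for i = 1, 2, 3, and Gᵢⱼ = (ρ² + aᵢ²) μᵢ² δᵢⱼ + ρ₀⁴ρ²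 aᵢ aⱼ μᵢ² μⱼ²/(ΠF) for i, j ∈ {1, 2, 3}. Then det G = −(Π − ρ² ρ₀⁴) μ₁² μ₂² μ₃². -/
/-!
Writing `S = diag(1, μ₁, μ₂, μ₃)`, `D = diag(-1, ρ² + a₁², ρ² + a₂², ρ² + a₃²)`,
`w = (1, -a₁μ₁, -a₂μ₂, -a₃μ₃)` and `k = ρ₀⁴ρ²/(ΠF)`, the Killing metric factors as
`G = S (D + k w wᵀ) S`. Since `ρ > 0`, `D` is invertible, and the matrix determinant lemma gives
`det (D + k w wᵀ) = det D · (1 + k wᵀ D⁻¹ w) = -Π (1 - k F)`, because `wᵀ D⁻¹ w = -F`.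
-/

open Matrix

theorem Matrix.det_diagonal_add_vecMulVec {n K : Type*} [Fintype n] [DecidableEq n] [Field K]
    {d : n → K} (hd : ∀ i, d i ≠ 0) (u v : n → K) :
    (diagonal d + vecMulVec u v).det = (∏ i, d i) * (1 + ∑ i, v i * u i / d i) := by
  have hunit : IsUnit (diagonal d).det := by
    rw [det_diagonal]; exact (Finset.prod_ne_zero_iff.mpr fun i _ => hd i).isUnit
  have hinv : (diagonal d)⁻¹ = diagonal fun i => (d i)⁻¹ :=
    inv_eq_left_inv (by simp [diagonal_mul_diagonal, hd])
  rw [vecMulVec_eq Unit, det_add_replicateCol_mul_replicateRow hunit, det_diagonal, det_unique,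
    hinv]
  simp [mul_apply, diagonal_apply, replicateRow, replicateCol, div_eq_mul_inv, mul_assoc, mul_comm]

/-- The determinant of the Killing metric `G_{ij}` of the seven-dimensional Myers–Perry
black hole on the Killing fields `∂_t, ∂_{φ₁}, ∂_{φ₂}, ∂_{φ₃}` equals
`−(Π − ρ²ρ₀⁴)μ₁²μ₂²μ₃²`, where `Π = (ρ²+a₁²)(ρ²+a₂²)(ρ²+a₃²)` and
`F = 1 − Σᵢ aᵢ²μᵢ²/(ρ²+aᵢ²)`. -/
theorem stmt_17 (ρ a₁ a₂ a₃ ρ₀ μ₁ μ₂ μ₃ : ℝ) (hρ : 0 < ρ)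
    (P F : ℝ)
    (hP : P = (ρ ^ 2 + a₁ ^ 2) * (ρ ^ 2 + a₂ ^ 2) * (ρ ^ 2 + a₃ ^ 2))
    (hF : F = 1 - a₁ ^ 2 * μ₁ ^ 2 / (ρ ^ 2 + a₁ ^ 2) - a₂ ^ 2 * μ₂ ^ 2 / (ρ ^ 2 + a₂ ^ 2)
      - a₃ ^ 2 * μ₃ ^ 2 / (ρ ^ 2 + a₃ ^ 2))
    (hF0 : F ≠ 0) :
    Matrix.det
      !![-1 + ρ₀ ^ 4 * ρ ^ 2 / (P * F),
         -(ρ₀ ^ 4 * ρ ^ 2 * a₁ * μ₁ ^ 2) / (P * F),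
         -(ρ₀ ^ 4 * ρ ^ 2 * a₂ * μ₂ ^ 2) / (P * F),
         -(ρ₀ ^ 4 * ρ ^ 2 * a₃ * μ₃ ^ 2) / (P * F);
         -(ρ₀ ^ 4 * ρ ^ 2 * a₁ * μ₁ ^ 2) / (P * F),
         (ρ ^ 2 + a₁ ^ 2) * μ₁ ^ 2 + ρ₀ ^ 4 * ρ ^ 2 * a₁ * a₁ * μ₁ ^ 2 * μ₁ ^ 2 / (P * F),
         ρ₀ ^ 4 * ρ ^ 2 * a₁ * a₂ * μ₁ ^ 2 * μ₂ ^ 2 / (P * F),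
         ρ₀ ^ 4 * ρ ^ 2 * a₁ * a₃ * μ₁ ^ 2 * μ₃ ^ 2 / (P * F);
         -(ρ₀ ^ 4 * ρ ^ 2 * a₂ * μ₂ ^ 2) / (P * F),
         ρ₀ ^ 4 * ρ ^ 2 * a₂ * a₁ * μ₂ ^ 2 * μ₁ ^ 2 / (P * F),
         (ρ ^ 2 + a₂ ^ 2) * μ₂ ^ 2 + ρ₀ ^ 4 * ρ ^ 2 * a₂ * a₂ * μ₂ ^ 2 * μ₂ ^ 2 / (P * F),
         ρ₀ ^ 4 * ρ ^ 2 * a₂ * a₃ * μ₂ ^ 2 * μ₃ ^ 2 / (P * F);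
         -(ρ₀ ^ 4 * ρ ^ 2 * a₃ * μ₃ ^ 2) / (P * F),
         ρ₀ ^ 4 * ρ ^ 2 * a₃ * a₁ * μ₃ ^ 2 * μ₁ ^ 2 / (P * F),
         ρ₀ ^ 4 * ρ ^ 2 * a₃ * a₂ * μ₃ ^ 2 * μ₂ ^ 2 / (P * F),
         (ρ ^ 2 + a₃ ^ 2) * μ₃ ^ 2 + ρ₀ ^ 4 * ρ ^ 2 * a₃ * a₃ * μ₃ ^ 2 * μ₃ ^ 2 / (P * F)]
      = -(P - ρ ^ 2 * ρ₀ ^ 4) * μ₁ ^ 2 * μ₂ ^ 2 * μ₃ ^ 2 := by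
  set s : Fin 4 → ℝ := ![1, μ₁, μ₂, μ₃]
  set e : Fin 4 → ℝ := ![-1, ρ ^ 2 + a₁ ^ 2, ρ ^ 2 + a₂ ^ 2, ρ ^ 2 + a₃ ^ 2]
  set w : Fin 4 → ℝ := ![1, -(a₁ * μ₁), -(a₂ * μ₂), -(a₃ * μ₃)]
  set k := ρ₀ ^ 4 * ρ ^ 2 / (P * F)
  have he : ∀ i, e i ≠ 0 := by
    intro i; fin_cases i <;> simp [e] <;> positivity
  have hprod_e : ∏ i, e i = -P := by
    simp only [Fin.prod_univ_four, e, hP, Fin.isValue, cons_val_zero, cons_val_one, cons_val]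
    ring
  have hsum : ∑ i, w i * (k • w) i / e i = -(k * F) := by
    simp only [Fin.sum_univ_four, w, e, hF, Pi.smul_apply, smul_eq_mul, Fin.isValue, cons_val_zero,
      cons_val_one, cons_val]
    ring
  have hkF : k * F * P = ρ₀ ^ 4 * ρ ^ 2 := by
    have hP0 : P ≠ 0 := by rw [hP]; positivity
    simp only [k]
    field_simp
  calc _ = (diagonal s * (diagonal e + vecMulVec (k • w) w) * diagonal s).det := by
        congr 1
        ext i j
        simp only [mul_diagonal, diagonal_mul, Matrix.add_apply, diagonal_apply, vecMulVec_apply,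
          Pi.smul_apply, smul_eq_mul]
        fin_cases i <;> fin_cases j <;> simp [s, e, w, k] <;> ring
    _ = (μ₁ * μ₂ * μ₃) ^ 2 * (-P * (1 - k * F)) := by
        rw [det_mul, det_mul, det_diagonal_add_vecMulVec he, det_diagonal, hprod_e, hsum]
        simp only [Fin.prod_univ_four, s, Fin.isValue, cons_val_zero, cons_val_one, cons_val]
        ring
    _ = _ := by linear_combination (μ₁ * μ₂ * μ₃) ^ 2 * hkF
end
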